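/- For any constants c₀ > 0 and c₁ > 1 there is a constant c₂ > 0 such that for all x > c₀, the integral from x to c₁x of |σ̂₁(u)|² du is at least c₂, where σ̂₁ denotes the Fourier transform of arc-length measure on the unit circle (a radial function). -/

import Mathlib

open MeasureTheory Real

/-- The Fourier transform of arc-length measure on the unit circle in `ℝ²`,
viewed as a radial function: `σ̂₁(ξ) = ∫_{circle} e^{-2πi x·ξ} dx`, which by rotation
invariance equals `∫_0^{2π} cos(2π r cos θ) dθ` where `r = |ξ|`. -/
noncomputable def sigmaHatOne (r : ℝ) : ℝ :=
  ∫ θ in (0:ℝ)..(2 * π), Real.cos (2 * π * r * Real.cos θ)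

/-!
Since `σ̂₁(r) = 2π J₀(2πr)` solves Bessel's equation of order `0`, `w(r) = √r σ̂₁(r)` solves
`w'' + ((2π)² + 1/(4r²)) w = 0`. Its energy `E = w'² + (2π)² w²` satisfies `|E'| ≤ E/(8πr²)`,
so on `[c, ∞)` it stays within a factor `exp (1/(8πc))` of `E(c)`, and `E(c) > 0` because
`σ̂₁ > 0` near `0`. Integrating `(w w')' = E - (2(2π)² + 1/(4r²)) w²` over `[x, c₁x]` gives
`∫ w² ≳ (c₁ - 1) x`, hence `∫ σ̂₁² ≳ 1` for large `x`. On the remaining compact range of `x` the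
integral is positive, since `w` cannot vanish on an interval without `E` vanishing there.
-/

open Set Filter Topology intervalIntegral

theorem hasDerivAt_intervalIntegral_mul_comp_mul {φ φ' p q : ℝ → ℝ} {a b C : ℝ}
    (hφ : ∀ t, HasDerivAt φ (φ' t) t) (hφ'_cont : Continuous φ') (hφ'_le : ∀ t, |φ' t| ≤ C)
    (hp : Continuous p) (hq : Continuous q) (x : ℝ) :
    HasDerivAt (fun y => ∫ θ in a..b, p θ * φ (y * q θ))
      (∫ θ in a..b, p θ * q θ * φ' (x * q θ)) x := by
  have hφ_cont : Continuous φ := continuous_iff_continuousAt.2 fun t => (hφ t).continuousAt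
  refine (hasDerivAt_integral_of_dominated_loc_of_deriv_le (μ := volume)
    (F := fun y θ => p θ * φ (y * q θ)) (F' := fun y θ => p θ * q θ * φ' (y * q θ))
    (bound := fun θ => |p θ * q θ| * C)
    univ_mem (Eventually.of_forall fun y => by fun_prop)
    ((by fun_prop : Continuous _).intervalIntegrable _ _) (by fun_prop)
    (ae_of_all _ fun θ _ y _ => ?_) ((by fun_prop : Continuous _).intervalIntegrable _ _)
    (ae_of_all _ fun θ _ y _ => ?_)).2
  · rw [norm_mul]
    exact mul_le_mul_of_nonneg_left (hφ'_le _) (abs_nonneg _)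
  · have := ((hφ (y * q θ)).comp y ((hasDerivAt_id y).mul_const (q θ))).const_mul (p θ)
    simpa [mul_comm, mul_left_comm, mul_assoc] using this

section Gronwall

variable {E E' ρ ρ' : ℝ → ℝ} {a b : ℝ}

theorem exp_sub_mul_le_of_abs_deriv_le (hab : a ≤ b)
    (hE : ∀ t ∈ Icc a b, HasDerivAt E (E' t) t) (hρ : ∀ t ∈ Icc a b, HasDerivAt ρ (ρ' t) t)
    (hE' : ∀ t ∈ Icc a b, |E' t| ≤ ρ' t * E t) :
    exp (ρ a - ρ b) * E a ≤ E b := by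
  have hmono : MonotoneOn (fun t => E t * exp (ρ t)) (Icc a b) := by
    refine monotoneOn_of_hasDerivWithinAt_nonneg (convex_Icc a b)
      (f' := fun t => (E' t + ρ' t * E t) * exp (ρ t))
      (fun t ht => ((hE t ht).mul (hρ t ht).exp).continuousAt.continuousWithinAt)
      (fun t ht => ?_) (fun t ht => ?_)
    · have ht := interior_subset ht
      exact (((hE t ht).mul (hρ t ht).exp).congr_deriv (by ring)).hasDerivWithinAt
    · have := neg_abs_le (E' t)
      have := hE' t (interior_subset ht)
      exact mul_nonneg (by linarith) (exp_pos _).le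
  calc exp (ρ a - ρ b) * E a = E a * exp (ρ a) * exp (-ρ b) := by
        rw [sub_eq_add_neg, exp_add]; ring
    _ ≤ E b * exp (ρ b) * exp (-ρ b) := mul_le_mul_of_nonneg_right
        (hmono (left_mem_Icc.2 hab) (right_mem_Icc.2 hab) hab) (exp_pos _).le
    _ = E b := by rw [mul_assoc, ← exp_add, add_neg_cancel, exp_zero, mul_one]

theorem le_exp_sub_mul_of_abs_deriv_le (hab : a ≤ b)
    (hE : ∀ t ∈ Icc a b, HasDerivAt E (E' t) t) (hρ : ∀ t ∈ Icc a b, HasDerivAt ρ (ρ' t) t)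
    (hE' : ∀ t ∈ Icc a b, |E' t| ≤ ρ' t * E t) :
    E b ≤ exp (ρ b - ρ a) * E a := by
  have hanti : AntitoneOn (fun t => E t * exp (-ρ t)) (Icc a b) := by
    refine antitoneOn_of_hasDerivWithinAt_nonpos (convex_Icc a b)
      (f' := fun t => (E' t - ρ' t * E t) * exp (-ρ t))
      (fun t ht => ((hE t ht).mul (hρ t ht).neg.exp).continuousAt.continuousWithinAt)
      (fun t ht => ?_) (fun t ht => ?_)
    · have ht := interior_subset ht
      exact (((hE t ht).mul (hρ t ht).neg.exp).congr_deriv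
        (by simp only [Pi.neg_apply]; ring)).hasDerivWithinAt
    · have := le_abs_self (E' t)
      have := hE' t (interior_subset ht)
      exact mul_nonpos_of_nonpos_of_nonneg (by linarith) (exp_pos _).le
  calc E b = E b * exp (-ρ b) * exp (ρ b) := by
        rw [mul_assoc, ← exp_add, neg_add_cancel, exp_zero, mul_one]
    _ ≤ E a * exp (-ρ a) * exp (ρ b) := mul_le_mul_of_nonneg_right
        (hanti (left_mem_Icc.2 hab) (right_mem_Icc.2 hab) hab) (exp_pos _).le
    _ = exp (ρ b - ρ a) * E a := by rw [sub_eq_add_neg, exp_add]; ring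

end Gronwall

theorem continuous_intervalIntegral_of_bounds {f u v : ℝ → ℝ} (hf : Continuous f)
    (hu : Continuous u) (hv : Continuous v) : Continuous fun x => ∫ t in u x..v x, f t := by
  have hF := continuous_primitive (μ := volume) (fun a b => hf.intervalIntegrable a b) 0
  have h : (fun x => ∫ t in u x..v x, f t) =
      fun x => (∫ t in 0..v x, f t) - ∫ t in 0..u x, f t :=
    funext fun x => (integral_interval_sub_left (hf.intervalIntegrable _ _)
      (hf.intervalIntegrable _ _)).symm
  rw [h]
  exact (hF.comp hv).sub (hF.comp hu)

theorem exists_pos_forall_le_of_eventually_le {G : ℝ → ℝ} {a c : ℝ}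
    (hG : ContinuousOn G (Ici a)) (hpos : ∀ x ≥ a, 0 < G x) (hc : 0 < c)
    (hev : ∀ᶠ x in atTop, c ≤ G x) :
    ∃ c' > 0, ∀ x ≥ a, c' ≤ G x := by
  obtain ⟨X, hX⟩ := eventually_atTop.1 hev
  obtain ⟨z, hz, hmin⟩ := isCompact_Icc.exists_isMinOn (nonempty_Icc.2 (le_max_left a X))
    (hG.mono Icc_subset_Ici_self)
  refine ⟨min (G z) c, lt_min (hpos z hz.1) hc, fun x hx => ?_⟩
  rcases le_total x (max a X) with hxX | hXx
  · exact (min_le_left _ _).trans (hmin ⟨hx, hxX⟩)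
  · exact (min_le_right _ _).trans (hX x ((le_max_right a X).trans hXx))

noncomputable def oscillatorEnergy (k : ℝ) (w g : ℝ → ℝ) (t : ℝ) : ℝ :=
  g t ^ 2 + k ^ 2 * w t ^ 2

theorem oscillatorEnergy_nonneg (k : ℝ) (w g : ℝ → ℝ) (t : ℝ) :
    0 ≤ oscillatorEnergy k w g t := by
  unfold oscillatorEnergy; positivity

theorem two_mul_abs_mul_le_oscillatorEnergy (k : ℝ) (w g : ℝ → ℝ) (t : ℝ) :
    2 * k * |w t * g t| ≤ oscillatorEnergy k w g t := by
  rw [abs_mul, oscillatorEnergy]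
  nlinarith [sq_nonneg (k * |w t| - |g t|), sq_abs (w t), sq_abs (g t)]

/-- `w` solves `w'' + (k² + 1/(4t²)) w = 0` on `(0, ∞)` with `w' = g`: the normal form of
Bessel's equation of order `0`, satisfied by `√t J₀(k t)`. -/
structure IsNormalBesselSolution (k : ℝ) (w g : ℝ → ℝ) : Prop where
  hasDerivAt_w : ∀ t > 0, HasDerivAt w (g t) t
  hasDerivAt_g : ∀ t > 0, HasDerivAt g (-(k ^ 2 + (4 * t ^ 2)⁻¹) * w t) t

namespace IsNormalBesselSolution

variable {k : ℝ} {w g : ℝ → ℝ} (h : IsNormalBesselSolution k w g)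
include h

theorem hasDerivAt_oscillatorEnergy {t : ℝ} (ht : 0 < t) :
    HasDerivAt (oscillatorEnergy k w g) (-(w t * g t) / (2 * t ^ 2)) t := by
  refine (((h.hasDerivAt_g t ht).pow 2).add
    (((h.hasDerivAt_w t ht).pow 2).const_mul (k ^ 2))).congr_deriv ?_
  field_simp
  ring

theorem continuousOn_oscillatorEnergy : ContinuousOn (oscillatorEnergy k w g) (Ioi 0) :=
  fun _ ht => (h.hasDerivAt_oscillatorEnergy ht).continuousAt.continuousWithinAt

/-- The energy drifts by at most the factor `exp (± 1/(4 k a))` on `[a, ∞)`, since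
`|E'| ≤ E/(4 k t²)` and `1/(4 k t²)` integrates to at most `1/(4 k a)`. -/
theorem oscillatorEnergy_bounds (hk : 0 < k) {a b : ℝ} (ha : 0 < a) (hab : a ≤ b) :
    exp (-(4 * k * a)⁻¹) * oscillatorEnergy k w g a ≤ oscillatorEnergy k w g b ∧
      oscillatorEnergy k w g b ≤ exp ((4 * k * a)⁻¹) * oscillatorEnergy k w g a := by
  have hpos : ∀ t ∈ Icc a b, 0 < t := fun t ht => ha.trans_le ht.1
  have hρ : ∀ t ∈ Icc a b, HasDerivAt (fun s => -(4 * k * s)⁻¹) (4 * k * t ^ 2)⁻¹ t := by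
    intro t ht
    have := hpos t ht
    refine (((hasDerivAt_id t).const_mul (4 * k)).inv (by positivity)).neg.congr_deriv ?_
    simp only [id]
    field_simp
  have hE' : ∀ t ∈ Icc a b,
      |-(w t * g t) / (2 * t ^ 2)| ≤ (4 * k * t ^ 2)⁻¹ * oscillatorEnergy k w g t := by
    intro t ht
    have := hpos t ht
    have := two_mul_abs_mul_le_oscillatorEnergy k w g t
    rw [abs_div, abs_neg, abs_of_pos (by positivity : (0:ℝ) < 2 * t ^ 2),
      div_le_iff₀ (by positivity)]
    field_simp
    linarith
  have hE := fun t ht => h.hasDerivAt_oscillatorEnergy (hpos t ht)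
  have hgap : (4 * k * a)⁻¹ - (4 * k * b)⁻¹ ≤ (4 * k * a)⁻¹ := by
    have := hpos b (right_mem_Icc.2 hab)
    linarith [inv_nonneg.2 (by positivity : 0 ≤ 4 * k * b)]
  have hEa := oscillatorEnergy_nonneg k w g a
  constructor
  · refine le_trans ?_ (exp_sub_mul_le_of_abs_deriv_le hab hE hρ hE')
    gcongr
    linarith
  · refine (le_exp_sub_mul_of_abs_deriv_le hab hE hρ hE').trans ?_
    gcongr
    linarith

theorem oscillatorEnergy_pos (hk : 0 < k) {s t : ℝ} (hs : 0 < s) (hst : s ≤ t) (hws : w s ≠ 0) :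
    0 < oscillatorEnergy k w g t := by
  have hEs : 0 < oscillatorEnergy k w g s := by
    have := sq_nonneg (g s)
    have : 0 < k ^ 2 * w s ^ 2 := by positivity
    unfold oscillatorEnergy; linarith
  exact (mul_pos (exp_pos _) hEs).trans_le (h.oscillatorEnergy_bounds hk hs hst).1

theorem oscillatorEnergy_eq_zero_of_eventuallyEq_zero {t : ℝ} (ht : 0 < t)
    (hzero : w =ᶠ[𝓝 t] 0) : oscillatorEnergy k w g t = 0 := by
  have hgt : g t = 0 :=
    (h.hasDerivAt_w t ht).unique ((hasDerivAt_const t 0).congr_of_eventuallyEq hzero)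
  simp [oscillatorEnergy, hgt, hzero.eq_of_nhds]

theorem continuousOn_w : ContinuousOn w (Ioi 0) :=
  fun t ht => (h.hasDerivAt_w t ht).continuousAt.continuousWithinAt

theorem continuousOn_g : ContinuousOn g (Ioi 0) :=
  fun t ht => (h.hasDerivAt_g t ht).continuousAt.continuousWithinAt

theorem continuousOn_weight_mul_sq :
    ContinuousOn (fun t => (2 * k ^ 2 + (4 * t ^ 2)⁻¹) * w t ^ 2) (Ioi 0) := by
  have := h.continuousOn_w
  fun_prop (disch := intro t (_ : 0 < t); positivity)

theorem integral_oscillatorEnergy_eq {a b : ℝ} (ha : 0 < a) (hab : a ≤ b) :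
    ∫ t in a..b, oscillatorEnergy k w g t =
      (w b * g b - w a * g a) + ∫ t in a..b, (2 * k ^ 2 + (4 * t ^ 2)⁻¹) * w t ^ 2 := by
  have hsub : uIcc a b ⊆ Ioi 0 := fun t ht => ha.trans_le (by simpa [hab] using ht.1)
  have hE : IntervalIntegrable (oscillatorEnergy k w g) volume a b :=
    (((h.continuousOn_g.pow 2).add ((h.continuousOn_w.pow 2).const_smul (k ^ 2))).mono
      hsub).intervalIntegrable
  have hW : IntervalIntegrable (fun t => (2 * k ^ 2 + (4 * t ^ 2)⁻¹) * w t ^ 2) volume a b :=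
    (h.continuousOn_weight_mul_sq.mono hsub).intervalIntegrable
  have hderiv : ∀ t ∈ uIcc a b, HasDerivAt (fun s => w s * g s)
      (oscillatorEnergy k w g t - (2 * k ^ 2 + (4 * t ^ 2)⁻¹) * w t ^ 2) t := by
    intro t ht
    refine ((h.hasDerivAt_w t (hsub ht)).mul (h.hasDerivAt_g t (hsub ht))).congr_deriv ?_
    unfold oscillatorEnergy
    ring
  have := integral_eq_sub_of_hasDerivAt hderiv (hE.sub hW)
  rw [integral_sub hE hW] at this
  linarith

theorem le_mul_integral_sq (hk : 0 < k) {c a b : ℝ} (hc : 0 < c) (hca : c ≤ a) (hab : a ≤ b) :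
    exp (-(4 * k * c)⁻¹) * oscillatorEnergy k w g c * (b - a) -
        exp ((4 * k * c)⁻¹) * oscillatorEnergy k w g c / k ≤
      (2 * k ^ 2 + (4 * c ^ 2)⁻¹) * ∫ t in a..b, w t ^ 2 := by
  have hsub : Icc a b ⊆ Ioi 0 := fun t ht => hc.trans_le (hca.trans ht.1)
  have hbounds := fun t (ht : t ∈ Icc a b) => h.oscillatorEnergy_bounds hk hc (hca.trans ht.1)
  have henergy : exp (-(4 * k * c)⁻¹) * oscillatorEnergy k w g c * (b - a) ≤
      ∫ t in a..b, oscillatorEnergy k w g t := by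
    have := integral_mono_on hab (intervalIntegrable_const (μ := volume))
      ((h.continuousOn_oscillatorEnergy.mono hsub).intervalIntegrable_of_Icc hab)
      fun t ht => (hbounds t ht).1
    rwa [intervalIntegral.integral_const, smul_eq_mul, mul_comm] at this
  have hweight : ∫ t in a..b, (2 * k ^ 2 + (4 * t ^ 2)⁻¹) * w t ^ 2 ≤
      (2 * k ^ 2 + (4 * c ^ 2)⁻¹) * ∫ t in a..b, w t ^ 2 := by
    rw [← intervalIntegral.integral_const_mul]
    refine integral_mono_on hab
      ((h.continuousOn_weight_mul_sq.mono hsub).intervalIntegrable_of_Icc hab)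
      (((h.continuousOn_w.mono hsub).pow 2).intervalIntegrable_of_Icc hab |>.const_mul _)
      fun t ht => ?_
    have := hsub ht
    gcongr
    exact hca.trans ht.1
  have hjump : w b * g b - w a * g a ≤ exp ((4 * k * c)⁻¹) * oscillatorEnergy k w g c / k := by
    have hboundary : ∀ t ∈ Icc a b,
        2 * k * |w t * g t| ≤ exp ((4 * k * c)⁻¹) * oscillatorEnergy k w g c :=
      fun t ht => (two_mul_abs_mul_le_oscillatorEnergy k w g t).trans (hbounds t ht).2
    have := hboundary a (left_mem_Icc.2 hab)
    have := hboundary b (right_mem_Icc.2 hab)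
    rw [le_div_iff₀ hk]
    nlinarith [mul_le_mul_of_nonneg_left (le_abs_self (w b * g b)) hk.le,
      mul_le_mul_of_nonneg_left (neg_abs_le (w a * g a)) hk.le]
  rw [h.integral_oscillatorEnergy_eq (hc.trans_le hca) hab] at henergy
  linarith

end IsNormalBesselSolution

noncomputable def sigmaHatOneDeriv (r : ℝ) : ℝ :=
  ∫ θ in (0:ℝ)..(2 * π), -(2 * π * cos θ) * sin (2 * π * r * cos θ)

noncomputable def sigmaHatOneDeriv2 (r : ℝ) : ℝ :=
  ∫ θ in (0:ℝ)..(2 * π), -(2 * π * cos θ) ^ 2 * cos (2 * π * r * cos θ)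

theorem hasDerivAt_sigmaHatOne (x : ℝ) : HasDerivAt sigmaHatOne (sigmaHatOneDeriv x) x := by
  have := hasDerivAt_intervalIntegral_mul_comp_mul (a := 0) (b := 2 * π) (p := fun _ => 1)
    (q := fun θ => 2 * π * cos θ) hasDerivAt_cos continuous_sin.neg
    (fun t => (abs_neg (sin t)).trans_le (abs_sin_le_one t)) continuous_const (by fun_prop) x
  convert this using 1
  · ext y; simp only [sigmaHatOne]; congr 1; ext θ; ring_nf
  · simp only [sigmaHatOneDeriv]; congr 1; ext θ; ring_nf

theorem hasDerivAt_sigmaHatOneDeriv (x : ℝ) :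
    HasDerivAt sigmaHatOneDeriv (sigmaHatOneDeriv2 x) x := by
  have := hasDerivAt_intervalIntegral_mul_comp_mul (a := 0) (b := 2 * π)
    (p := fun θ => -(2 * π * cos θ)) (q := fun θ => 2 * π * cos θ) hasDerivAt_sin continuous_cos
    abs_cos_le_one (by fun_prop) (by fun_prop) x
  convert this using 1
  · ext y; simp only [sigmaHatOneDeriv]; congr 1; ext θ; ring_nf
  · simp only [sigmaHatOneDeriv2]; congr 1; ext θ; ring_nf

theorem continuous_sigmaHatOne : Continuous sigmaHatOne :=
  continuous_iff_continuousAt.2 fun x => (hasDerivAt_sigmaHatOne x).continuousAt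

/-- Bessel's equation of order `0` for `σ̂₁ = 2π J₀(2π ·)`. -/
theorem sigmaHatOne_bessel (x : ℝ) :
    x * sigmaHatOneDeriv2 x + sigmaHatOneDeriv x + (2 * π) ^ 2 * x * sigmaHatOne x = 0 := by
  -- the combined integrand is `-2π d/dθ (sin θ sin (2π x cos θ))`
  have hderiv : ∀ θ ∈ uIcc 0 (2 * π),
      HasDerivAt (fun t => -(2 * π) * (sin t * sin (2 * π * x * cos t)))
        (x * (-(2 * π * cos θ) ^ 2 * cos (2 * π * x * cos θ)) +
          -(2 * π * cos θ) * sin (2 * π * x * cos θ) +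
          (2 * π) ^ 2 * x * cos (2 * π * x * cos θ)) θ := by
    intro θ _
    have := ((hasDerivAt_sin θ).mul ((hasDerivAt_cos θ).const_mul (2 * π * x)).sin).const_mul
      (-(2 * π))
    refine this.congr_deriv ?_
    linear_combination ((2 * π) ^ 2 * x * cos (2 * π * x * cos θ)) * sin_sq_add_cos_sq θ
  have hint : ∀ f : ℝ → ℝ, Continuous f → IntervalIntegrable f volume 0 (2 * π) :=
    fun f hf => hf.intervalIntegrable _ _
  have := integral_eq_sub_of_hasDerivAt hderiv (hint _ (by fun_prop))
  rw [integral_add (hint _ (by fun_prop)) (hint _ (by fun_prop)),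
    integral_add (hint _ (by fun_prop)) (hint _ (by fun_prop)),
    intervalIntegral.integral_const_mul, intervalIntegral.integral_const_mul] at this
  simpa [sigmaHatOne, sigmaHatOneDeriv, sigmaHatOneDeriv2] using this

theorem sigmaHatOne_pos_of_abs_lt {u : ℝ} (hu : |u| < 1 / 4) : 0 < sigmaHatOne u := by
  refine intervalIntegral_pos_of_pos ((by fun_prop : Continuous _).intervalIntegrable _ _)
    (fun θ => cos_pos_of_mem_Ioo (abs_lt.1 ?_)) (by positivity)
  calc |2 * π * u * cos θ| ≤ 2 * π * |u| := by
        rw [abs_mul, abs_mul, abs_of_pos (by positivity : 0 < 2 * π)]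
        exact mul_le_of_le_one_right (by positivity) (abs_cos_le_one θ)
    _ < π / 2 := by nlinarith [pi_pos]

/-- The Liouville substitution `w = √x σ̂₁` removes the first-order term of Bessel's equation. -/
noncomputable def sigmaHatNormal (x : ℝ) : ℝ := √x * sigmaHatOne x

noncomputable def sigmaHatNormalDeriv (x : ℝ) : ℝ :=
  sigmaHatOne x / (2 * √x) + √x * sigmaHatOneDeriv x

theorem isNormalBesselSolution_sigmaHatNormal :
    IsNormalBesselSolution (2 * π) sigmaHatNormal sigmaHatNormalDeriv where
  hasDerivAt_w t ht := by
    have hs : √t ≠ 0 := (sqrt_pos.2 ht).ne'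
    refine ((hasDerivAt_sqrt ht.ne').mul (hasDerivAt_sigmaHatOne t)).congr_deriv ?_
    simp only [sigmaHatNormalDeriv]
    field_simp
  hasDerivAt_g t ht := by
    have hs : √t ≠ 0 := (sqrt_pos.2 ht).ne'
    have h1 := (hasDerivAt_sigmaHatOne t).div ((hasDerivAt_sqrt ht.ne').const_mul 2) (by positivity)
    have h2 := (hasDerivAt_sqrt ht.ne').mul (hasDerivAt_sigmaHatOneDeriv t)
    refine (h1.add h2).congr_deriv ?_
    have hb := sigmaHatOne_bessel t
    have hsq : √t ^ 2 = t := sq_sqrt ht.le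
    simp only [sigmaHatNormal]
    field_simp
    rw [show √t ^ 4 = (√t ^ 2) ^ 2 by ring, hsq]
    linear_combination 16 * t ^ 3 * hb

theorem oscillatorEnergy_sigmaHatNormal_pos {c : ℝ} (hc : 0 < c) :
    0 < oscillatorEnergy (2 * π) sigmaHatNormal sigmaHatNormalDeriv c := by
  have hs : 0 < min c (1 / 8) := lt_min hc (by norm_num)
  have hσ : 0 < sigmaHatOne (min c (1 / 8)) := sigmaHatOne_pos_of_abs_lt <| by
    rw [abs_of_pos hs]; linarith [min_le_right c (1 / 8)]
  exact isNormalBesselSolution_sigmaHatNormal.oscillatorEnergy_pos (by positivity) hs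
    (min_le_left _ _) (mul_pos (sqrt_pos.2 hs) hσ).ne'

theorem integral_sigmaHatOne_sq_pos {a b : ℝ} (ha : 0 < a) (hab : a < b) :
    0 < ∫ t in a..b, sigmaHatOne t ^ 2 := by
  refine integral_pos hab (continuous_sigmaHatOne.pow 2).continuousOn
    (fun t _ => sq_nonneg _) ?_
  by_contra! hzero
  have hm : 0 < (a + b) / 2 := by linarith
  have hvanish : sigmaHatNormal =ᶠ[𝓝 ((a + b) / 2)] 0 := by
    filter_upwards [Ioo_mem_nhds (by linarith : a < (a + b) / 2) (by linarith : (a + b) / 2 < b)]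
      with t ht
    have : sigmaHatOne t = 0 := pow_eq_zero_iff two_ne_zero |>.1 <|
      le_antisymm (hzero t (Ioo_subset_Icc_self ht)) (sq_nonneg _)
    simp [sigmaHatNormal, this]
  exact (oscillatorEnergy_sigmaHatNormal_pos hm).ne'
    (isNormalBesselSolution_sigmaHatNormal.oscillatorEnergy_eq_zero_of_eventuallyEq_zero hm hvanish)

theorem integral_sigmaHatNormal_sq_div_le {a b : ℝ} (ha : 0 < a) (hab : a ≤ b) :
    (∫ t in a..b, sigmaHatNormal t ^ 2) / b ≤ ∫ t in a..b, sigmaHatOne t ^ 2 := by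
  rw [← intervalIntegral.integral_div]
  refine integral_mono_on hab
    ((((continuous_sqrt.mul continuous_sigmaHatOne).pow 2).div_const b).intervalIntegrable _ _)
    ((continuous_sigmaHatOne.pow 2).intervalIntegrable _ _) fun t ht => ?_
  rw [sigmaHatNormal, mul_pow, sq_sqrt (ha.trans_le ht.1).le, div_le_iff₀ (ha.trans_le hab),
    mul_comm]
  exact mul_le_mul_of_nonneg_left ht.2 (sq_nonneg _)

theorem eventually_le_integral_sigmaHatOne_sq {c₁ : ℝ} (hc₁ : 1 < c₁) :
    ∃ c > 0, ∀ᶠ x in atTop, c ≤ ∫ t in x..c₁ * x, sigmaHatOne t ^ 2 := by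
  set E₁ := oscillatorEnergy (2 * π) sigmaHatNormal sigmaHatNormalDeriv 1
  have hE₁ : 0 < E₁ := oscillatorEnergy_sigmaHatNormal_pos one_pos
  set m := exp (-(4 * (2 * π) * 1)⁻¹) * E₁
  set M := exp ((4 * (2 * π) * 1)⁻¹) * E₁
  set C := 2 * (2 * π) ^ 2 + (4 * (1 : ℝ) ^ 2)⁻¹
  have hm : 0 < m := by positivity
  have hC : 0 < C := by positivity
  refine ⟨m * (c₁ - 1) / (2 * C * c₁), by have := sub_pos.2 hc₁; positivity, ?_⟩
  filter_upwards [eventually_ge_atTop 1, eventually_ge_atTop (M / (π * m * (c₁ - 1)))]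
    with x hx hxM
  have hxc₁x : x ≤ c₁ * x := le_mul_of_one_le_left (by linarith) hc₁.le
  have hw : m * (c₁ * x - x) - M / (2 * π) ≤ C * ∫ t in x..c₁ * x, sigmaHatNormal t ^ 2 :=
    isNormalBesselSolution_sigmaHatNormal.le_mul_integral_sq (by positivity) one_pos hx hxc₁x
  have hσ := integral_sigmaHatNormal_sq_div_le (by linarith) hxc₁x
  have hc₁x : 0 < c₁ * x := by positivity
  have hM : M / (2 * π) ≤ m * (c₁ - 1) * x / 2 := by
    rw [div_le_iff₀ (by have := sub_pos.2 hc₁; positivity)] at hxM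
    rw [div_le_iff₀ (by positivity)]
    linarith
  calc m * (c₁ - 1) / (2 * C * c₁) = m * (c₁ - 1) * x / 2 / C / (c₁ * x) := by
        field_simp
    _ ≤ (∫ t in x..c₁ * x, sigmaHatNormal t ^ 2) / (c₁ * x) := by
        gcongr
        rw [div_le_iff₀ hC]
        linarith
    _ ≤ ∫ t in x..c₁ * x, sigmaHatOne t ^ 2 := hσ

/-- For any constants `c₀ > 0`, `c₁ > 1` there is `c₂ > 0` such that for all `x > c₀`,
`∫_x^{c₁ x} |σ̂₁(u)|² du ≥ c₂`. -/
theorem lower_bound_sigmaHat_sq_integral :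
    ∀ c₀ > (0:ℝ), ∀ c₁ > (1:ℝ), ∃ c₂ > (0:ℝ), ∀ x > c₀,
      c₂ ≤ ∫ u in x..(c₁ * x), (sigmaHatOne u) ^ 2 := by
  intro c₀ hc₀ c₁ hc₁
  obtain ⟨c, hc, hlarge⟩ := eventually_le_integral_sigmaHatOne_sq hc₁
  have hpos : ∀ x ≥ c₀, 0 < ∫ u in x..(c₁ * x), sigmaHatOne u ^ 2 := fun x hx =>
    integral_sigmaHatOne_sq_pos (hc₀.trans_le hx)
      (lt_mul_of_one_lt_left (hc₀.trans_le hx) hc₁)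
  have hcont : Continuous fun x => ∫ u in x..(c₁ * x), sigmaHatOne u ^ 2 :=
    continuous_intervalIntegral_of_bounds (continuous_sigmaHatOne.pow 2) continuous_id
      (continuous_const_mul c₁)
  obtain ⟨c₂, hc₂, hle⟩ := exists_pos_forall_le_of_eventually_le hcont.continuousOn hpos hc hlarge
  exact ⟨c₂, hc₂, fun x hx => hle x hx.le⟩
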